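/- arXiv:2105.07437 — 3 statements merged into one kernel-verified Lean document; each statement's English description precedes it below -/
import Mathlib

section
/- Let Z : [0,∞) → ℝ be continuous with Z(0) = 0 and let I(t) be the perturbed SIS path with I(0) = i0 ∈ (0,N). Then for all t ≥ 0, ln(I(t)/(N−I(t))) = ln(i0/(N−i0)) + ∫_0^t f(I(s))ds + N Z(t), where f(x) = ν − (γ+μ)x/(N−x). -/
open MeasureTheory

/-- The key logarithmic identity for the perturbed SIS path:
`ln(I(t)/(N-I(t))) = ln(i0/(N-i0)) + ∫_0^t f(I(s)) ds + N Z(t)`. -/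
theorem perturbed_sis_log_identity
    (N γ μ i0 ν : ℝ) (hN : 0 < N) (hγ : 0 < γ) (hμ : 0 < μ)
    (hi0 : i0 ∈ Set.Ioo 0 N)
    (Z : ℝ → ℝ) (hZ : Continuous Z) (hZ0 : Z 0 = 0)
    (f : ℝ → ℝ) (hf : f = fun x => ν - (γ + μ) * x / (N - x))
    (I : ℝ → ℝ)
    (hI : I = fun t => N * i0 * Real.exp (ν * t + N * Z t) /
      (N - i0 + i0 * Real.exp (ν * t + N * Z t) +
        i0 * (γ + μ) * ∫ s in (0:ℝ)..t, Real.exp (ν * s + N * Z s))) :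
    ∀ t : ℝ, 0 ≤ t →
      Real.log (I t / (N - I t)) =
        Real.log (i0 / (N - i0)) + (∫ s in (0:ℝ)..t, f (I s)) + N * Z t := by
  obtain ⟨hi0pos, hi0N⟩ := hi0
  set E : ℝ → ℝ := fun s => Real.exp (ν * s + N * Z s) with hE_def
  have hE : Continuous E := by
    exact Real.continuous_exp.comp
      ((continuous_const.mul continuous_id).add (continuous_const.mul hZ))
  have hEpos : ∀ s, 0 < E s := fun s => Real.exp_pos _
  set c : ℝ := i0 * (γ + μ) with hc_def
  have hcpos : 0 < c := mul_pos hi0pos (by linarith)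
  set A : ℝ → ℝ := fun t => ∫ s in (0:ℝ)..t, E s with hA_def
  have hAderiv : ∀ s : ℝ, HasDerivAt A (E s) s := by
    intro s
    exact intervalIntegral.integral_hasDerivAt_right (hE.intervalIntegrable 0 s)
      (hE.stronglyMeasurableAtFilter _ _) hE.continuousAt
  set B : ℝ → ℝ := fun t => N - i0 + c * A t with hB_def
  have hBderiv : ∀ s : ℝ, HasDerivAt B (c * E s) s := fun s =>
    ((hAderiv s).const_mul c).const_add _
  have hBcont : Continuous B :=
    continuous_iff_continuousAt.2 fun s => (hBderiv s).continuousAt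
  have hApos : ∀ s, 0 ≤ s → 0 ≤ A s := by
    intro s hs
    exact intervalIntegral.integral_nonneg hs fun u _ => (hEpos u).le
  have hBpos : ∀ s, 0 ≤ s → 0 < B s := by
    intro s hs
    have := hApos s hs
    have : 0 ≤ c * A s := mul_nonneg hcpos.le this
    simp only [hB_def]
    linarith
  have hA0 : A 0 = 0 := intervalIntegral.integral_same
  have hB0 : B 0 = N - i0 := by simp [hB_def, hA0]
  -- rewrite I
  have hI' : ∀ s, I s = N * i0 * E s / (B s + i0 * E s) := by
    intro s
    rw [hI]
    simp only [hE_def, hB_def, hA_def, hc_def]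
    ring
  intro t ht
  have hDpos : ∀ s, 0 ≤ s → 0 < B s + i0 * E s := fun s hs =>
    add_pos (hBpos s hs) (mul_pos hi0pos (hEpos s))
  have hNI : ∀ s, 0 ≤ s → N - I s = N * B s / (B s + i0 * E s) := by
    intro s hs
    rw [hI' s]
    have hD := (hDpos s hs).ne'
    field_simp
    ring
  have hfI : ∀ s, 0 ≤ s → f (I s) = ν - c * E s / B s := by
    intro s hs
    rw [hf]
    simp only
    rw [hNI s hs, hI' s]
    have hD := (hDpos s hs).ne'
    have hB := (hBpos s hs).ne'
    rw [hc_def]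
    field_simp
  -- FTC for log B
  have hlogderiv : ∀ s ∈ Set.uIcc (0:ℝ) t,
      HasDerivAt (fun u => Real.log (B u)) (c * E s / B s) s := by
    intro s hs
    rw [Set.uIcc_of_le ht] at hs
    exact (hBderiv s).log (hBpos s hs.1).ne'
  have hintcont : ContinuousOn (fun s => c * E s / B s) (Set.uIcc (0:ℝ) t) := by
    rw [Set.uIcc_of_le ht]
    exact ((continuous_const.mul hE).continuousOn).div hBcont.continuousOn
      fun s hs => (hBpos s hs.1).ne'
  have hint : IntervalIntegrable (fun s => c * E s / B s) volume 0 t :=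
    hintcont.intervalIntegrable
  have key : ∫ s in (0:ℝ)..t, c * E s / B s = Real.log (B t) - Real.log (B 0) :=
    intervalIntegral.integral_eq_sub_of_hasDerivAt hlogderiv hint
  -- compute the integral of f ∘ I
  have hintf : (∫ s in (0:ℝ)..t, f (I s)) =
      ν * t - (Real.log (B t) - Real.log (B 0)) := by
    rw [← key]
    rw [show (∫ s in (0:ℝ)..t, f (I s)) = ∫ s in (0:ℝ)..t, (ν - c * E s / B s) by
      apply intervalIntegral.integral_congr
      intro s hs
      rw [Set.uIcc_of_le ht] at hs
      exact hfI s hs.1]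
    rw [intervalIntegral.integral_sub intervalIntegrable_const hint]
    simp [mul_comm]
  -- compute log (I t / (N - I t))
  have hlogI : Real.log (I t / (N - I t)) =
      Real.log i0 + (ν * t + N * Z t) - Real.log (B t) := by
    rw [hNI t ht, hI' t]
    have hD := (hDpos t ht).ne'
    have hB := (hBpos t ht).ne'
    have harg : N * i0 * E t / (B t + i0 * E t) / (N * B t / (B t + i0 * E t)) =
        i0 * E t / B t := by
      field_simp
    rw [harg, div_eq_mul_inv, Real.log_mul (by positivity) (by positivity),
      Real.log_mul hi0pos.ne' (hEpos t).ne', Real.log_inv, hE_def, Real.log_exp]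
    ring
  rw [hlogI, hintf, hB0, Real.log_div hi0pos.ne' (by linarith)]
  ring
end

section
/- Deterministic persistence criterion, lower part: if ν > 0, Z : [0,∞) → ℝ is continuous with Z(0)=0 and limsup_{t→∞} Z(t)/t < +∞ with N·limsup_{t→∞} Z(t)/t ≤ −f(x) for a given x ∈ (0,N), then the perturbed SIS path satisfies liminf_{t→∞} I(t) ≤ x. -/
open MeasureTheory Filter

lemma gronwall_exp_aux (g : ℝ → ℝ) (hg : Continuous g) (c T : ℝ) (hc : 0 < c)
    (h : ∀ s, T ≤ s → c * ∫ u in (0:ℝ)..s, g u ≤ g s) :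
    ∀ t, T ≤ t → c * (∫ u in (0:ℝ)..T, g u) * Real.exp (c * (t - T)) ≤
      c * ∫ u in (0:ℝ)..t, g u := by
  set F : ℝ → ℝ := fun t => ∫ u in (0:ℝ)..t, g u with hFdef
  have hFd : ∀ t : ℝ, HasDerivAt F (g t) t := fun t =>
    (hg.integral_hasStrictDerivAt 0 t).hasDerivAt
  have hFc : Continuous F := continuous_iff_continuousAt.mpr fun t => (hFd t).continuousAt
  set G : ℝ → ℝ := fun t => F t * Real.exp (-c * t) with hGdef
  have hGd : ∀ t : ℝ, HasDerivAt G
      (g t * Real.exp (-c * t) + F t * (Real.exp (-c * t) * -c)) t := by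
    intro t
    have he : HasDerivAt (fun x : ℝ => Real.exp (-c * x)) (Real.exp (-c * t) * -c) t := by
      simpa using ((hasDerivAt_id t).const_mul (-c)).exp
    exact (hFd t).mul he
  have hmono : MonotoneOn G (Set.Ici T) := by
    apply monotoneOn_of_deriv_nonneg (convex_Ici T)
    · exact (hFc.mul (Real.continuous_exp.comp (continuous_const.mul continuous_id))).continuousOn
    · exact fun s _ => (hGd s).differentiableAt.differentiableWithinAt
    · intro s hs
      rw [interior_Ici] at hs
      rw [(hGd s).deriv]
      have h1 := h s (le_of_lt hs)
      have h2 := Real.exp_pos (-c * s)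
      nlinarith [mul_nonneg (sub_nonneg.mpr h1) h2.le]
  intro t ht
  have hGle : G T ≤ G t := hmono Set.self_mem_Ici ht ht
  have h1 : F T * Real.exp (-c * T) * Real.exp (c * t) ≤
      F t * Real.exp (-c * t) * Real.exp (c * t) :=
    mul_le_mul_of_nonneg_right hGle (Real.exp_nonneg _)
  rw [mul_assoc, mul_assoc, ← Real.exp_add, ← Real.exp_add] at h1
  have e1 : -c * t + c * t = 0 := by ring
  have e2 : -c * T + c * t = c * (t - T) := by ring
  rw [e1, e2, Real.exp_zero, mul_one] at h1
  nlinarith [mul_le_mul_of_nonneg_left h1 hc.le]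

/-- Deterministic persistence criterion (lower part): if `ν > 0`,
`limsup Z(t)/t < +∞` (i.e. `Z(t)/t` is eventually bounded above) and
`N · limsup Z(t)/t ≤ -f(x)` for a given `x ∈ (0, N)`, then the perturbed SIS
path satisfies `liminf I(t) ≤ x`. -/
theorem perturbed_sis_persistence_liminf
    (N γ μ i0 ν : ℝ) (hN : 0 < N) (hγ : 0 < γ) (hμ : 0 < μ)
    (hi0 : i0 ∈ Set.Ioo 0 N) (hν : 0 < ν)
    (Z : ℝ → ℝ) (hZ : Continuous Z) (hZ0 : Z 0 = 0)
    (hZbdd : IsBoundedUnder (· ≤ ·) atTop (fun t => Z t / t))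
    (f : ℝ → ℝ) (hf : f = fun x => ν - (γ + μ) * x / (N - x))
    (x : ℝ) (hx : x ∈ Set.Ioo 0 N)
    (hZlim : N * limsup (fun t => Z t / t) atTop ≤ - f x)
    (I : ℝ → ℝ)
    (hI : I = fun t => N * i0 * Real.exp (ν * t + N * Z t) /
      (N - i0 + i0 * Real.exp (ν * t + N * Z t) +
        i0 * (γ + μ) * ∫ s in (0:ℝ)..t, Real.exp (ν * s + N * Z s))) :
    liminf I atTop ≤ x := by
  obtain ⟨hi0l, hi0r⟩ := hi0
  obtain ⟨hxl, hxr⟩ := hx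
  by_contra hcon
  push_neg at hcon
  -- continuity of the integrand
  have hgc : Continuous (fun u : ℝ => Real.exp (ν * u + N * Z u)) :=
    Real.continuous_exp.comp ((continuous_const.mul continuous_id).add (continuous_const.mul hZ))
  -- the denominator is positive for t ≥ 0
  have hIlow : ∀ t : ℝ, 0 ≤ t → 0 < N - i0 + i0 * Real.exp (ν * t + N * Z t) +
      i0 * (γ + μ) * ∫ s in (0:ℝ)..t, Real.exp (ν * s + N * Z s) := by
    intro t ht
    have h1 : 0 ≤ ∫ s in (0:ℝ)..t, Real.exp (ν * s + N * Z s) :=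
      intervalIntegral.integral_nonneg ht (fun s _ => (Real.exp_pos _).le)
    have h2 := Real.exp_pos (ν * t + N * Z t)
    have h3 : 0 < i0 * Real.exp (ν * t + N * Z t) := mul_pos hi0l h2
    have h4 : 0 ≤ i0 * (γ + μ) * ∫ s in (0:ℝ)..t, Real.exp (ν * s + N * Z s) :=
      mul_nonneg (mul_nonneg hi0l.le (by linarith)) h1
    linarith
  have hbdd : IsBoundedUnder (· ≥ ·) atTop I := by
    refine ⟨0, ?_⟩
    rw [eventually_map]
    filter_upwards [eventually_ge_atTop (0:ℝ)] with t ht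
    rw [hI]
    exact div_nonneg (by positivity) (hIlow t ht).le
  -- pick y with x < y < min (liminf I) N
  obtain ⟨y, hxy, hyN, hylim⟩ : ∃ y, x < y ∧ y < N ∧ y < liminf I atTop :=
    ⟨min ((x + liminf I atTop) / 2) ((x + N) / 2), lt_min (by linarith) (by linarith),
      lt_of_le_of_lt (min_le_right _ _) (by linarith),
      lt_of_le_of_lt (min_le_left _ _) (by linarith)⟩
  have hy0 : 0 < y := lt_trans hxl hxy
  have hyI : ∀ᶠ t in atTop, y < I t := eventually_lt_of_lt_liminf hylim hbdd
  -- constants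
  obtain ⟨c₀, hc₀def⟩ : ∃ c₀, c₀ = (γ + μ) * x / (N - x) := ⟨_, rfl⟩
  obtain ⟨c₁, hc₁def⟩ : ∃ c₁, c₁ = (γ + μ) * y / (N - y) := ⟨_, rfl⟩
  have hc₀pos : 0 < c₀ := hc₀def ▸ div_pos (by nlinarith) (by linarith)
  have hc₁pos : 0 < c₁ := hc₁def ▸ div_pos (by nlinarith) (by linarith)
  have hc01 : c₀ < c₁ := by
    rw [hc₀def, hc₁def, div_lt_div_iff₀ (by linarith) (by linarith)]
    nlinarith [mul_pos (mul_pos (add_pos hγ hμ) hN) (sub_pos.mpr hxy)]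
  obtain ⟨ε, hε, hc1ε⟩ : ∃ ε, 0 < ε ∧ c₁ = c₀ + 2 * ε :=
    ⟨(c₁ - c₀) / 2, by linarith, by ring⟩
  -- eventual bound on Z t / t from the limsup hypothesis
  have hfx : -f x = c₀ - ν := by rw [hf, hc₀def]; ring
  have hLs : limsup (fun t => Z t / t) atTop < (c₀ - ν + ε) / N := by
    rw [hfx] at hZlim
    rw [lt_div_iff₀ hN]
    nlinarith
  have hZev : ∀ᶠ t in atTop, Z t / t < (c₀ - ν + ε) / N :=
    eventually_lt_of_limsup_lt hLs hZbdd
  obtain ⟨T₀, hT₀⟩ := eventually_atTop.mp (hZev.and hyI)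
  obtain ⟨T, hTT₀, hT1⟩ : ∃ T, T₀ ≤ T ∧ (1:ℝ) ≤ T :=
    ⟨max T₀ 1, le_max_left _ _, le_max_right _ _⟩
  have hT0 : (0:ℝ) < T := lt_of_lt_of_le one_pos hT1
  -- key differential inequality
  have hkey : ∀ s, T ≤ s →
      c₁ * ∫ u in (0:ℝ)..s, Real.exp (ν * u + N * Z u) ≤ Real.exp (ν * s + N * Z s) := by
    intro s hs
    have hs0 : (0:ℝ) ≤ s := le_trans hT0.le hs
    have hys := (hT₀ s (le_trans hTT₀ hs)).2
    rw [hI] at hys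
    simp only at hys
    have hD := hIlow s hs0
    rw [lt_div_iff₀ hD] at hys
    have hF0 : 0 ≤ ∫ u in (0:ℝ)..s, Real.exp (ν * u + N * Z u) :=
      intervalIntegral.integral_nonneg hs0 (fun u _ => (Real.exp_pos _).le)
    have hE := Real.exp_pos (ν * s + N * Z s)
    rw [hc₁def, div_mul_eq_mul_div, div_le_iff₀ (by linarith : (0:ℝ) < N - y)]
    nlinarith [mul_pos hy0 (sub_pos.mpr hi0r), hys, mul_pos hi0l hE]
  -- Gronwall lower bound
  have hg := gronwall_exp_aux (fun u => Real.exp (ν * u + N * Z u)) hgc c₁ T hc₁pos hkey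
  have hFT : 0 < ∫ u in (0:ℝ)..T, Real.exp (ν * u + N * Z u) :=
    intervalIntegral.intervalIntegral_pos_of_pos
      (hgc.intervalIntegrable 0 T) (fun u => Real.exp_pos _) hT0
  obtain ⟨K, hφlow⟩ : ∃ K, ∀ t, T ≤ t → c₁ * t + K ≤ ν * t + N * Z t := by
    refine ⟨Real.log (c₁ * ∫ u in (0:ℝ)..T, Real.exp (ν * u + N * Z u)) - c₁ * T, ?_⟩
    intro t ht
    have h1 := le_trans (hg t ht) (hkey t ht)
    have h2 : c₁ * (∫ u in (0:ℝ)..T, Real.exp (ν * u + N * Z u)) * Real.exp (c₁ * (t - T)) =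
        Real.exp (c₁ * t +
          (Real.log (c₁ * ∫ u in (0:ℝ)..T, Real.exp (ν * u + N * Z u)) - c₁ * T)) := by
      rw [show c₁ * t + (Real.log (c₁ * ∫ u in (0:ℝ)..T, Real.exp (ν * u + N * Z u)) - c₁ * T)
          = Real.log (c₁ * ∫ u in (0:ℝ)..T, Real.exp (ν * u + N * Z u)) + c₁ * (t - T) by ring,
        Real.exp_add, Real.exp_log (mul_pos hc₁pos hFT)]
    rw [h2] at h1
    exact Real.exp_le_exp.mp h1
  -- derive the contradiction at a large time t
  obtain ⟨t, htT, htK⟩ : ∃ t, T ≤ t ∧ |K| / ε + 1 ≤ t :=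
    ⟨max (T + 1) (|K| / ε + 1), le_trans (by linarith) (le_max_left _ _), le_max_right _ _⟩
  have ht0 : (0:ℝ) < t := lt_of_lt_of_le hT0 htT
  have hKt : -(ε * t) ≤ K := by
    have h2 : |K| < ε * t := by
      rw [← div_lt_iff₀' hε]
      linarith
    nlinarith [neg_abs_le K]
  have hlow := hφlow t htT
  have hupp := (hT₀ t (le_trans hTT₀ htT)).1
  rw [div_lt_iff₀ ht0] at hupp
  have hNZ : N * Z t < (c₀ - ν + ε) * t := by
    have h := mul_lt_mul_of_pos_left hupp hN
    calc N * Z t < N * ((c₀ - ν + ε) / N * t) := h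
      _ = (c₀ - ν + ε) * t := by field_simp
  have e3 : c₁ * t = c₀ * t + 2 * (ε * t) := by rw [hc1ε]; ring
  have e4 : (c₀ - ν + ε) * t = c₀ * t - ν * t + ε * t := by ring
  linarith
end

section
/- Stochastic extinction theorem: let Y be the mean-reverting OU process dY = −αY dt + σ dB, Y(0)=0, and let I(t) = N i0 e^{νt+NY(t)} / (N − i0 + i0 e^{νt+NY(t)} + i0(γ+μ)∫_0^t e^{νs+NY(s)}ds) with i0 ∈ (0,N). If ν = βN − (γ+μ) ≤ 0, then almost surely lim_{t→∞} I(t) = 0. -/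
/-!
Pathwise, the OU equation is solved by variation of constants:
`Y t = σ e^{-αt} B t + α σ e^{-αt} ∫₀ᵗ e^{αs} (B t - B s) ds`.
A Borel–Cantelli argument over the dyadic increments of `B` on the unit intervals `[n, n + 1]`,
followed by chaining, shows that almost surely `|B t - B s| ≤ C (t - s + 1) √(1 + log (1 + t))`.
The exponential weight absorbs the factor `t - s + 1`, so `Y t = O(√(log t)) = o(log t)`.
For `ν < 0` the numerator `e^{νt + N Y t}` of `I` then tends to `0`, while the denominator stays
above `N - i0`. For `ν = 0` we have `e^{N Y t} ≤ t^{1/4}` eventually, whereas the integral in the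
denominator is at least of order `t^{3/4}`.
-/

open MeasureTheory ProbabilityTheory Filter

/-- A standard one-dimensional Brownian motion. -/
structure IsStandardBrownianMotion {Ω : Type*} [MeasurableSpace Ω]
    (P : Measure Ω) (B : ℝ → Ω → ℝ) : Prop where
  isProb : IsProbabilityMeasure P
  init : ∀ ω, B 0 ω = 0
  meas : ∀ t, Measurable (B t)
  cont : ∀ᵐ ω ∂P, Continuous fun t => B t ω
  gauss : ∀ s t : ℝ, 0 ≤ s → s ≤ t →
    Measure.map (fun ω => B t ω - B s ω) P = gaussianReal 0 (Real.toNNReal (t - s))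
  indep : ∀ (n : ℕ) (u : Fin (n + 1) → ℝ), Monotone u → (∀ i, 0 ≤ u i) →
    iIndepFun
      (fun i : Fin n => fun ω => B (u i.succ) ω - B (u i.castSucc) ω) P

open Set Real Asymptotics Topology
open scoped NNReal ENNReal

lemma hasSubgaussianMGF_gaussianReal (v : ℝ≥0) :
    HasSubgaussianMGF (fun x => x) v (gaussianReal 0 v) where
  integrable_exp_mul t := integrable_exp_mul_gaussianReal t
  mgf_le t := by simp [mgf_fun_id_gaussianReal]

lemma ProbabilityTheory.HasSubgaussianMGF.measureReal_abs_ge_le {Ω : Type*}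
    [MeasurableSpace Ω] {μ : Measure Ω} [IsFiniteMeasure μ] {X : Ω → ℝ} {c : ℝ≥0}
    (h : HasSubgaussianMGF X c μ) {ε : ℝ} (hε : 0 ≤ ε) :
    μ.real {ω | ε ≤ |X ω|} ≤ 2 * exp (-ε ^ 2 / (2 * c)) := by
  have hsub : {ω | ε ≤ |X ω|} ⊆ {ω | ε ≤ X ω} ∪ {ω | ε ≤ (-X) ω} := fun ω hω => by
    rcases le_abs'.1 (show ε ≤ |X ω| from hω) with h | h
    · exact Or.inr (show ε ≤ -X ω by linarith)
    · exact Or.inl h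
  calc μ.real {ω | ε ≤ |X ω|} ≤ μ.real {ω | ε ≤ X ω} + μ.real {ω | ε ≤ (-X) ω} :=
        (measureReal_mono hsub).trans (measureReal_union_le _ _)
    _ ≤ 2 * exp (-ε ^ 2 / (2 * c)) := by
        linarith [h.measure_ge_le hε, h.neg.measure_ge_le hε]

noncomputable def sqrtLogGrowth (t : ℝ) : ℝ := √(1 + log (1 + t))

lemma log_one_add_nonneg {t : ℝ} (ht : 0 ≤ t) : 0 ≤ log (1 + t) := log_nonneg (by linarith)

lemma sqrtLogGrowth_nonneg (t : ℝ) : 0 ≤ sqrtLogGrowth t := sqrt_nonneg _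

lemma one_le_sqrtLogGrowth {t : ℝ} (ht : 0 ≤ t) : 1 ≤ sqrtLogGrowth t :=
  one_le_sqrt.2 (by linarith [log_one_add_nonneg ht])

lemma sq_sqrtLogGrowth {t : ℝ} (ht : 0 ≤ t) : sqrtLogGrowth t ^ 2 = 1 + log (1 + t) :=
  sq_sqrt (by linarith [log_one_add_nonneg ht])

lemma sqrtLogGrowth_le_sqrtLogGrowth {s t : ℝ} (hs : 0 ≤ s) (hst : s ≤ t) :
    sqrtLogGrowth s ≤ sqrtLogGrowth t :=
  sqrt_le_sqrt (by gcongr)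

lemma isLittleO_sqrt_log_log : (fun t => √(log t)) =o[atTop] log := by
  have hsqrt : (fun x : ℝ => √x) =o[atTop] fun x => x := by
    have := (isLittleO_pow_pow_atTop_of_lt (𝕜 := ℝ) one_lt_two).sqrt
      (.of_forall fun x => sq_nonneg x)
    exact isLittleO_abs_right.1 (by simpa [sqrt_sq_eq_abs] using this)
  exact hsqrt.comp_tendsto tendsto_log_atTop

lemma isLittleO_sqrtLogGrowth_log : sqrtLogGrowth =o[atTop] log := by
  refine IsBigO.trans_isLittleO (IsBigO.of_bound √2 ?_) isLittleO_sqrt_log_log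
  filter_upwards [eventually_ge_atTop (exp 2)] with t ht
  have ht0 : 0 < t := (exp_pos 2).trans_le ht
  have hlogt : 2 ≤ log t := by simpa using log_le_log (exp_pos 2) ht
  have hlog1t : log (1 + t) ≤ log 2 + log t := by
    rw [← log_mul two_ne_zero ht0.ne']
    exact log_le_log (by linarith) (by linarith [(add_one_le_exp 2).trans ht])
  rw [sqrtLogGrowth, Real.norm_of_nonneg (sqrt_nonneg _), Real.norm_of_nonneg (sqrt_nonneg _),
    ← sqrt_mul zero_le_two]
  exact sqrt_le_sqrt (by linarith [log_two_lt_d9])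

open Finset in
lemma abs_sub_le_sum_of_dyadic {f : ℝ → ℝ} {a : ℝ} {ε : ℕ → ℝ}
    (h : ∀ m k : ℕ, k < 2 ^ m → |f (a + (k + 1) / 2 ^ m) - f (a + k / 2 ^ m)| ≤ ε m)
    (m : ℕ) {j : ℕ} (hj : j ≤ 2 ^ m) :
    |f (a + j / 2 ^ m) - f a| ≤ ∑ i ∈ range (m + 1), ε i := by
  induction m generalizing j with
  | zero =>
    interval_cases j
    · simpa using (abs_nonneg _).trans (h 0 0 one_pos)
    · simpa using h 0 0 one_pos
  | succ m ih =>
    have hcoarse : ∀ i : ℕ, a + (2 * i : ℕ) / 2 ^ (m + 1) = a + i / 2 ^ m := fun i => by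
      push_cast; ring
    rw [sum_range_succ]
    obtain ⟨i, rfl | rfl⟩ := Nat.even_or_odd' j
    · rw [hcoarse]
      linarith [ih (j := i) (by omega), (abs_nonneg _).trans (h (m + 1) 0 (by positivity))]
    · have hstep := h (m + 1) (2 * i) (by omega)
      rw [hcoarse] at hstep
      push_cast at hstep ⊢
      calc |f (a + (2 * i + 1) / 2 ^ (m + 1)) - f a|
          ≤ |f (a + (2 * i + 1) / 2 ^ (m + 1)) - f (a + i / 2 ^ m)| + |f (a + i / 2 ^ m) - f a| :=
            abs_sub_le _ _ _
        _ ≤ _ := by linarith [ih (j := i) (by omega)]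

lemma abs_sub_le_tsum_of_dyadic {f : ℝ → ℝ} (hf : Continuous f) {a : ℝ} {ε : ℕ → ℝ}
    (hε : Summable ε)
    (h : ∀ m k : ℕ, k < 2 ^ m → |f (a + (k + 1) / 2 ^ m) - f (a + k / 2 ^ m)| ≤ ε m)
    {t : ℝ} (ht : t ∈ Icc a (a + 1)) : |f t - f a| ≤ ∑' m, ε m := by
  have hε0 : ∀ m, 0 ≤ ε m := fun m => (abs_nonneg _).trans (h m 0 (by positivity))
  set p : ℕ → ℝ := fun m => a + ⌊(t - a) * 2 ^ m⌋₊ / 2 ^ m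
  have hp : Tendsto p atTop (𝓝 t) := by
    refine tendsto_iff_dist_tendsto_zero.2 <| squeeze_zero (fun _ => dist_nonneg) (fun m => ?_)
      (tendsto_pow_atTop_nhds_zero_of_lt_one (by norm_num : (0 : ℝ) ≤ 1 / 2) (by norm_num))
    have h2m : (0 : ℝ) < 2 ^ m := by positivity
    have hlo := Nat.floor_le (mul_nonneg (sub_nonneg.2 ht.1) h2m.le)
    have hhi := Nat.lt_floor_add_one ((t - a) * 2 ^ m)
    have hpt : p m - t = (⌊(t - a) * 2 ^ m⌋₊ - (t - a) * 2 ^ m) / 2 ^ m := by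
      simp only [p]; field_simp; ring
    rw [Real.dist_eq, hpt, abs_div, abs_of_pos h2m, div_le_iff₀ h2m, one_div_pow,
      one_div_mul_cancel h2m.ne', abs_le]
    constructor <;> linarith
  have hfloor : ∀ m : ℕ, ⌊(t - a) * 2 ^ m⌋₊ ≤ 2 ^ m := fun m => by
    apply Nat.floor_le_of_le
    push_cast
    nlinarith [ht.2, pow_pos (two_pos : (0 : ℝ) < 2) m]
  refine le_of_tendsto ((hf.tendsto t).comp hp |>.sub_const (f a) |>.abs) (.of_forall fun m => ?_)
  exact (abs_sub_le_sum_of_dyadic h m (hfloor m)).trans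
    (hε.sum_le_tsum _ fun i _ => hε0 i)

lemma abs_sub_le_mul_of_abs_sub_le {f : ℝ → ℝ} {a t D : ℝ}
    (h : ∀ u v, a ≤ u → u ≤ v → v ≤ u + 1 → v ≤ t → |f v - f u| ≤ D)
    {s : ℝ} (has : a ≤ s) (hst : s ≤ t) : |f t - f s| ≤ (t - s + 1) * D := by
  have hD : 0 ≤ D := (abs_nonneg _).trans (h t t (has.trans hst) le_rfl (by linarith) le_rfl)
  have key : ∀ k : ℕ, ∀ s, a ≤ s → s ≤ t → t ≤ s + k → |f t - f s| ≤ k * D := by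
    intro k
    induction k with
    | zero => intro s _ hst hts; simp [le_antisymm hst (by simpa using hts)]
    | succ k ih =>
      intro s has hst hts
      rcases le_or_gt t (s + 1) with hts1 | hts1
      · exact (h s t has hst hts1 le_rfl).trans (by push_cast; nlinarith [k.cast_nonneg (α := ℝ)])
      · calc |f t - f s| ≤ |f t - f (s + 1)| + |f (s + 1) - f s| := abs_sub_le _ _ _
          _ ≤ k * D + D :=
              add_le_add (ih (s + 1) (by linarith) hts1.le (by push_cast at hts; linarith))
                (h s (s + 1) has (by linarith) le_rfl hts1.le)
          _ = (k + 1 : ℕ) * D := by push_cast; ring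
  calc |f t - f s| ≤ ⌈t - s⌉₊ * D := key _ s has hst (by linarith [Nat.le_ceil (t - s)])
    _ ≤ (t - s + 1) * D := by
        gcongr; exact (Nat.ceil_lt_add_one (by linarith)).le

lemma abs_sub_le_of_unit_oscillation {f : ℝ → ℝ} {C : ℝ} {N₀ : ℕ}
    (h : ∀ n : ℕ, N₀ ≤ n → ∀ u ∈ Icc (n : ℝ) (n + 1), |f u - f n| ≤ C * sqrtLogGrowth n)
    {s t : ℝ} (hs : N₀ ≤ s) (hst : s ≤ t) :
    |f t - f s| ≤ 3 * C * (t - s + 1) * sqrtLogGrowth t := by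
  have hC : 0 ≤ C := nonneg_of_mul_nonneg_left
    ((abs_nonneg _).trans (h N₀ le_rfl N₀ ⟨le_rfl, by linarith⟩))
    (by linarith [one_le_sqrtLogGrowth N₀.cast_nonneg])
  have hG : ∀ {x y : ℝ}, 0 ≤ x → x ≤ y → C * sqrtLogGrowth x ≤ C * sqrtLogGrowth y :=
    fun hx hxy => mul_le_mul_of_nonneg_left (sqrtLogGrowth_le_sqrtLogGrowth hx hxy) hC
  have hstep : ∀ u v, (N₀ : ℝ) ≤ u → u ≤ v → v ≤ u + 1 → v ≤ t →
      |f v - f u| ≤ 3 * C * sqrtLogGrowth t := by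
    intro u v hu huv hvu hvt
    set n := ⌊u⌋₊
    have hnu : (n : ℝ) ≤ u := Nat.floor_le (N₀.cast_nonneg.trans hu)
    have hun : u < n + 1 := Nat.lt_floor_add_one u
    have hn : N₀ ≤ n := Nat.le_floor hu
    have hGn := hG n.cast_nonneg (hnu.trans (huv.trans hvt))
    have hfu := h n hn u ⟨hnu, hun.le⟩
    have hGt : 0 ≤ C * sqrtLogGrowth t := mul_nonneg hC (sqrt_nonneg _)
    rcases le_or_gt v (n + 1) with hvn | hvn
    · linarith [h n hn v ⟨hnu.trans huv, hvn⟩, abs_sub_le (f v) (f n) (f u),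
        abs_sub_comm (f n) (f u)]
    · have hGn1 := hG (x := (n + 1 : ℕ)) (y := t) (by positivity) (by push_cast; linarith)
      have hv := h (n + 1) (by omega) v ⟨by push_cast; linarith, by push_cast; linarith⟩
      have hn1 := h n hn (n + 1 : ℕ) ⟨by push_cast; linarith, by push_cast; linarith⟩
      linarith [abs_sub_le (f v) (f (n + 1 : ℕ)) (f n), abs_sub_le (f v) (f n) (f u),
        abs_sub_comm (f n) (f u)]
  calc |f t - f s| ≤ (t - s + 1) * (3 * C * sqrtLogGrowth t) :=
        abs_sub_le_mul_of_abs_sub_le hstep hs hst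
    _ = 3 * C * (t - s + 1) * sqrtLogGrowth t := by ring

lemma exists_abs_sub_le_of_ge {f : ℝ → ℝ} (hf : Continuous f) {g : ℝ → ℝ}
    (hg : ∀ t, 0 ≤ t → 1 ≤ g t) {a K : ℝ}
    (h : ∀ s t, a ≤ s → s ≤ t → |f t - f s| ≤ K * (t - s + 1) * g t) :
    ∃ K', ∀ s t, 0 ≤ s → s ≤ t → |f t - f s| ≤ K' * (t - s + 1) * g t := by
  obtain ⟨M, hM⟩ := (isCompact_Icc (a := 0) (b := a)).exists_bound_of_continuousOn
    (f := fun x => f x - f a) (hf.sub continuous_const).continuousOn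
  simp only [Real.norm_eq_abs] at hM
  refine ⟨max K 0 + 2 * max M 0, fun s t hs hst => ?_⟩
  have hgt := hg t (hs.trans hst)
  have hw : 1 ≤ (t - s + 1) * g t := one_le_mul_of_one_le_of_one_le (by linarith) hgt
  have hK := le_max_left K 0
  have hK0 := le_max_right K 0
  have hM0 := le_max_right M 0
  rcases le_or_gt a s with has | has
  · nlinarith [h s t has hst]
  have hMs : |f s - f a| ≤ max M 0 := (hM s ⟨hs, has.le⟩).trans (le_max_left _ _)
  rcases le_or_gt a t with hat | hat
  · have hKa : K * (t - a + 1) * g t ≤ max K 0 * ((t - s + 1) * g t) := by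
      rw [mul_assoc]
      exact mul_le_mul hK (by gcongr) (by nlinarith) hK0
    nlinarith [h a t le_rfl hat, abs_sub_le (f t) (f a) (f s), abs_sub_comm (f a) (f s)]
  · have hMt : |f t - f a| ≤ max M 0 := (hM t ⟨hs.trans hst, hat.le⟩).trans (le_max_left _ _)
    nlinarith [abs_sub_le (f t) (f a) (f s), abs_sub_comm (f a) (f s)]

lemma exp_neg_two_mul_log_one_add (n : ℕ) : exp (-(2 * log (1 + n))) = 1 / (1 + n) ^ 2 := by
  rw [exp_neg, mul_comm, ← rpow_def_of_pos (by positivity), rpow_two, one_div]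

lemma exp_neg_two_le : exp (-2) ≤ 1 / 4 := by
  have h2 : 2 ≤ exp 1 := by linarith [add_one_le_exp (1 : ℝ)]
  rw [exp_neg, one_div, show (2 : ℝ) = 1 + 1 by norm_num, exp_add]
  exact inv_anti₀ (by norm_num) (by nlinarith)

lemma summable_succ_mul_three_quarters_pow :
    Summable fun m : ℕ => ((m : ℝ) + 1) * (3 / 4) ^ m := by
  have hq : ‖(3 / 4 : ℝ)‖ < 1 := by norm_num [Real.norm_eq_abs, abs_of_pos]
  simpa [add_mul] using (summable_pow_mul_geometric_of_norm_lt_one 1 hq).add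
    (summable_geometric_of_norm_lt_one hq)

/- The level-`m` threshold `(m + 1) (3/4)^m` is summable in `m`, while its square times `2^m`
(the inverse variance of a level-`m` increment) grows at least like `m + 1`: this pays for the `2^m`
increments of level `m`. The factor `√(1 + log (1 + n))` makes the bound summable in `n`. -/
lemma dyadic_tail_le (n m : ℕ) :
    (2 : ℝ) ^ m * (2 * exp (-(2 * sqrtLogGrowth n * ((m + 1) * (3 / 4) ^ m)) ^ 2 /
      (2 * (1 / 2 ^ m)))) ≤ 1 / (1 + n) ^ 2 * (1 / 2) ^ (m + 1) := by
  set L := log (1 + n)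
  have hL : 0 ≤ L := log_one_add_nonneg n.cast_nonneg
  have hscale : (m + 1 : ℝ) ≤ ((m + 1) * (3 / 4) ^ m) ^ 2 * 2 ^ m := by
    have : ((m + 1) * (3 / 4 : ℝ) ^ m) ^ 2 * 2 ^ m = (m + 1) ^ 2 * (9 / 8) ^ m := by
      rw [mul_pow, mul_assoc, ← pow_mul, mul_comm m 2, pow_mul, ← mul_pow]; norm_num
    rw [this]
    nlinarith [one_le_pow₀ (by norm_num : (1 : ℝ) ≤ 9 / 8) (n := m)]
  have hexponent : -(2 * sqrtLogGrowth n * ((m + 1) * (3 / 4) ^ m)) ^ 2 / (2 * (1 / 2 ^ m)) ≤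
      -(2 * L) + (m + 1) * (-2) := by
    rw [show -(2 * sqrtLogGrowth n * ((m + 1) * (3 / 4) ^ m)) ^ 2 / (2 * (1 / 2 ^ m)) =
        -(2 * sqrtLogGrowth n ^ 2 * (((m + 1) * (3 / 4) ^ m) ^ 2 * 2 ^ m)) by field_simp,
      sq_sqrtLogGrowth n.cast_nonneg]
    nlinarith
  calc (2 : ℝ) ^ m * (2 * exp (-(2 * sqrtLogGrowth n * ((m + 1) * (3 / 4) ^ m)) ^ 2 /
        (2 * (1 / 2 ^ m))))
      ≤ 2 ^ m * (2 * (exp (-(2 * L)) * exp (-2) ^ (m + 1))) := by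
        rw [← exp_nat_mul, ← exp_add]; push_cast; gcongr
    _ ≤ 2 ^ m * (2 * (1 / (1 + n) ^ 2 * (1 / 4) ^ (m + 1))) := by
        rw [exp_neg_two_mul_log_one_add]; gcongr; exact exp_neg_two_le
    _ = 1 / (1 + n) ^ 2 * (1 / 2) ^ (m + 1) := by
        rw [show (1 / 2 : ℝ) = 2 * (1 / 4) by norm_num, mul_pow, pow_succ]; ring

section BrownianMotion

variable {Ω : Type*} [MeasurableSpace Ω] {P : Measure Ω} {B : ℝ → Ω → ℝ}

lemma ae_eventually_forall_notMem {A : ℕ → ℕ → Set Ω} {u v : ℕ → ℝ} (hu : Summable u)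
    (hv : Summable v) (hu0 : ∀ n, 0 ≤ u n) (hv0 : ∀ m, 0 ≤ v m)
    (hA : ∀ n m, P (A n m) ≤ ENNReal.ofReal (u n * v m)) :
    ∀ᵐ ω ∂P, ∀ᶠ n in atTop, ∀ m, ω ∉ A n m := by
  have hrow : ∀ n, ∑' m, ENNReal.ofReal (u n * v m) = ENNReal.ofReal (u n * ∑' m, v m) :=
    fun n => by
      rw [← tsum_mul_left, ENNReal.ofReal_tsum_of_nonneg (fun m => mul_nonneg (hu0 n) (hv0 m))
        (hv.mul_left _)]
  have hsum : ∑' n, P (⋃ m, A n m) ≠ ∞ := by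
    refine ne_top_of_le_ne_top (ENNReal.ofReal_ne_top (r := ∑' n, u n * ∑' m, v m)) ?_
    calc ∑' n, P (⋃ m, A n m) ≤ ∑' n, ∑' m, ENNReal.ofReal (u n * v m) :=
          ENNReal.tsum_le_tsum fun n => (measure_iUnion_le _).trans (ENNReal.tsum_le_tsum (hA n))
      _ = ENNReal.ofReal (∑' n, u n * ∑' m, v m) := by
          rw [tsum_congr hrow, ENNReal.ofReal_tsum_of_nonneg
            (fun n => mul_nonneg (hu0 n) (tsum_nonneg hv0)) (hu.mul_right (∑' m, v m))]
  filter_upwards [ae_eventually_notMem hsum] with ω hω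
  filter_upwards [hω] with n hn m hm
  exact hn (mem_iUnion.2 ⟨m, hm⟩)

lemma IsStandardBrownianMotion.measure_abs_sub_ge_le (hB : IsStandardBrownianMotion P B)
    {s t x : ℝ} (hs : 0 ≤ s) (hst : s ≤ t) (hx : 0 ≤ x) :
    P {ω | x ≤ |B t ω - B s ω|} ≤ ENNReal.ofReal (2 * exp (-x ^ 2 / (2 * (t - s)))) := by
  have := hB.isProb
  have hinc : HasSubgaussianMGF (fun ω => B t ω - B s ω) (t - s).toNNReal P := by
    have h := hasSubgaussianMGF_gaussianReal (t - s).toNNReal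
    rw [← hB.gauss s t hs hst] at h
    exact h.of_map ((hB.meas t).sub (hB.meas s)).aemeasurable
  rw [← ofReal_measureReal]
  have := hinc.measureReal_abs_ge_le hx
  rw [Real.coe_toNNReal _ (by linarith)] at this
  exact ENNReal.ofReal_le_ofReal this

lemma IsStandardBrownianMotion.ae_eventually_dyadic_increment_le
    (hB : IsStandardBrownianMotion P B) :
    ∀ᵐ ω ∂P, ∀ᶠ n : ℕ in atTop, ∀ m k : ℕ, k < 2 ^ m →
      |B (n + (k + 1) / 2 ^ m) ω - B (n + k / 2 ^ m) ω| ≤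
        2 * sqrtLogGrowth n * ((m + 1) * (3 / 4) ^ m) := by
  set A : ℕ → ℕ → Set Ω := fun n m => ⋃ k ∈ Finset.range (2 ^ m),
    {ω | 2 * sqrtLogGrowth n * ((m + 1) * (3 / 4) ^ m) ≤
      |B (n + (k + 1) / 2 ^ m) ω - B (n + k / 2 ^ m) ω|}
  have hA : ∀ n m, P (A n m) ≤ ENNReal.ofReal (1 / (1 + n) ^ 2 * (1 / 2) ^ (m + 1)) := by
    intro n m
    have hx : 0 ≤ 2 * sqrtLogGrowth n * ((m + 1) * (3 / 4) ^ m) :=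
      mul_nonneg (mul_nonneg two_pos.le (sqrtLogGrowth_nonneg _)) (by positivity)
    calc P (A n m) ≤ ∑ k ∈ Finset.range (2 ^ m),
          ENNReal.ofReal (2 * exp (-(2 * sqrtLogGrowth n * ((m + 1) * (3 / 4) ^ m)) ^ 2 /
            (2 * (1 / 2 ^ m)))) := by
          refine (measure_biUnion_finset_le _ _).trans (Finset.sum_le_sum fun k _ => ?_)
          have := hB.measure_abs_sub_ge_le (s := n + k / 2 ^ m) (t := n + (k + 1) / 2 ^ m)
            (by positivity) (by gcongr; linarith) hx
          rwa [show (n + (k + 1) / 2 ^ m) - (n + k / 2 ^ m : ℝ) = 1 / 2 ^ m by ring] at this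
      _ ≤ ENNReal.ofReal (1 / (1 + n) ^ 2 * (1 / 2) ^ (m + 1)) := by
          rw [Finset.sum_const, Finset.card_range, nsmul_eq_mul, ← ENNReal.ofReal_natCast,
            ← ENNReal.ofReal_mul (by positivity)]
          exact ENNReal.ofReal_le_ofReal (by exact_mod_cast dyadic_tail_le n m)
  have hu : Summable fun n : ℕ => 1 / (1 + (n : ℝ)) ^ 2 := by
    refine ((summable_nat_add_iff 1).2 (summable_one_div_nat_pow.2 one_lt_two)).congr
      fun n => ?_
    push_cast; ring
  have hv : Summable fun m : ℕ => (1 / 2 : ℝ) ^ (m + 1) :=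
    (summable_nat_add_iff 1).2 summable_geometric_two
  filter_upwards [ae_eventually_forall_notMem hu hv (fun _ => by positivity)
    (fun _ => by positivity) hA] with ω hω
  filter_upwards [hω] with n hn m k hk
  exact le_of_lt (not_le.1 fun hle => hn m (mem_biUnion (Finset.mem_range.2 hk) hle))

lemma IsStandardBrownianMotion.ae_eventually_oscillation_le (hB : IsStandardBrownianMotion P B) :
    ∀ᵐ ω ∂P, ∃ C, ∀ᶠ n : ℕ in atTop, ∀ u ∈ Icc (n : ℝ) (n + 1),
      |B u ω - B n ω| ≤ C * sqrtLogGrowth n := by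
  filter_upwards [hB.ae_eventually_dyadic_increment_le, hB.cont] with ω hdyadic hcont
  refine ⟨2 * ∑' m : ℕ, ((m : ℝ) + 1) * (3 / 4) ^ m, ?_⟩
  filter_upwards [hdyadic] with n hn u hu
  have := abs_sub_le_tsum_of_dyadic hcont
    (summable_succ_mul_three_quarters_pow.mul_left (2 * sqrtLogGrowth n)) hn hu
  rw [tsum_mul_left] at this
  linarith

lemma IsStandardBrownianMotion.ae_exists_abs_sub_le (hB : IsStandardBrownianMotion P B) :
    ∀ᵐ ω ∂P, ∃ C, ∀ s t, 0 ≤ s → s ≤ t →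
      |B t ω - B s ω| ≤ C * (t - s + 1) * sqrtLogGrowth t := by
  filter_upwards [hB.ae_eventually_oscillation_le, hB.cont] with ω ⟨C, hC⟩ hcont
  obtain ⟨N₀, hN₀⟩ := eventually_atTop.1 hC
  exact exists_abs_sub_le_of_ge hcont (fun t ht => one_le_sqrtLogGrowth ht)
    fun s t hs hst => abs_sub_le_of_unit_oscillation hN₀ hs hst

end BrownianMotion

lemma exp_mul_integral_eq_of_integral_equation {α σ : ℝ} {b y : ℝ → ℝ} (hb : Continuous b)
    (hy : Continuous y) (hyb : ∀ t, 0 ≤ t → y t = σ * b t - α * ∫ s in (0 : ℝ)..t, y s)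
    {t : ℝ} (ht : 0 ≤ t) :
    exp (α * t) * ∫ s in (0 : ℝ)..t, y s = σ * ∫ s in (0 : ℝ)..t, exp (α * s) * b s := by
  set g : ℝ → ℝ := fun u =>
    exp (α * u) * (∫ s in (0 : ℝ)..u, y s) - σ * ∫ s in (0 : ℝ)..u, exp (α * s) * b s
  have hderiv : ∀ u, HasDerivAt g
      (exp (α * u) * (α * (∫ s in (0 : ℝ)..u, y s) + y u - σ * b u)) u := fun u => by
    have hexp : HasDerivAt (fun v => exp (α * v)) (exp (α * u) * α) u := by
      simpa using ((hasDerivAt_id u).const_mul α).exp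
    exact ((hexp.mul (hy.integral_hasStrictDerivAt 0 u).hasDerivAt).sub
      (((by fun_prop : Continuous fun s => exp (α * s) * b s).integral_hasStrictDerivAt 0
        u).hasDerivAt.const_mul σ)).congr_deriv (by ring)
  have hconst := constant_of_has_deriv_right_zero (f := g) (a := 0) (b := t)
    (fun u _ => (hderiv u).continuousAt.continuousWithinAt) (fun u hu => by
      have h0 : exp (α * u) * (α * (∫ s in (0 : ℝ)..u, y s) + y u - σ * b u) = 0 := by
        rw [hyb u hu.1]; ring
      exact h0 ▸ (hderiv u).hasDerivWithinAt) t ⟨ht, le_rfl⟩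
  simp only [g, intervalIntegral.integral_same, mul_zero, sub_zero] at hconst
  linarith

lemma integral_exp_const_mul {α : ℝ} (hα : α ≠ 0) (t : ℝ) :
    ∫ s in (0 : ℝ)..t, exp (α * s) = (exp (α * t) - 1) / α := by
  rw [intervalIntegral.integral_comp_mul_left (fun s => exp s) hα, integral_exp, mul_zero,
    exp_zero, smul_eq_mul, inv_mul_eq_div]

lemma integral_exp_const_mul_mul_sub_add_one_le {α t : ℝ} (hα : 0 < α) (ht : 0 ≤ t) :
    ∫ s in (0 : ℝ)..t, exp (α * s) * (t - s + 1) ≤ exp (α * t) * (1 / α + 1 / α ^ 2) := by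
  have hF : ∀ s, HasDerivAt (fun u => exp (α * u) * ((t - u + 1) / α + 1 / α ^ 2))
      (exp (α * s) * (t - s + 1)) s := fun s => by
    have hexp : HasDerivAt (fun v => exp (α * v)) (exp (α * s) * α) s := by
      simpa using ((hasDerivAt_id s).const_mul α).exp
    have hlin : HasDerivAt (fun u => (t - u + 1) / α + 1 / α ^ 2) (-1 / α) s := by
      simpa using ((((hasDerivAt_id s).const_sub t).add_const 1).div_const α).add_const
        (1 / α ^ 2)
    exact (hexp.mul hlin).congr_deriv (by field_simp; ring)
  rw [intervalIntegral.integral_eq_sub_of_hasDerivAt (fun s _ => hF s)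
    ((by fun_prop : Continuous fun s => exp (α * s) * (t - s + 1)).intervalIntegrable _ _)]
  simp only [sub_self, zero_add, mul_zero, exp_zero, one_mul, sub_zero]
  have : 0 ≤ (t + 1) / α + 1 / α ^ 2 := by positivity
  linarith

lemma abs_le_of_integral_equation {α σ D t : ℝ} (hα : 0 < α) {b y : ℝ → ℝ}
    (hb : Continuous b) (hy : Continuous y) (hb0 : b 0 = 0)
    (hyb : ∀ t, 0 ≤ t → y t = σ * b t - α * ∫ s in (0 : ℝ)..t, y s) (ht : 0 ≤ t)
    (hinc : ∀ s ∈ Icc 0 t, |b t - b s| ≤ (t - s + 1) * D) :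
    |y t| ≤ 2 * |σ| * (1 + 1 / α) * D := by
  set E := exp (α * t)
  set R := ∫ s in (0 : ℝ)..t, exp (α * s) * (b t - b s)
  have hE : 0 < E := exp_pos _
  have hD : 0 ≤ D := by simpa using (abs_nonneg _).trans (hinc t ⟨ht, le_rfl⟩)
  have hR : R = b t * ((E - 1) / α) - ∫ s in (0 : ℝ)..t, exp (α * s) * b s := by
    simp only [R, mul_sub]
    rw [intervalIntegral.integral_sub (Continuous.intervalIntegrable (by fun_prop) _ _)
      (Continuous.intervalIntegrable (by fun_prop) _ _),
      intervalIntegral.integral_mul_const, integral_exp_const_mul hα.ne', mul_comm]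
  have hrepr : y t = σ * b t / E + α * σ * R / E := by
    have hA : ∫ s in (0 : ℝ)..t, y s = σ * (∫ s in (0 : ℝ)..t, exp (α * s) * b s) / E := by
      rw [eq_div_iff hE.ne', mul_comm]
      exact exp_mul_integral_eq_of_integral_equation hb hy hyb ht
    rw [hyb t ht, hA, hR]
    field_simp
    ring
  have hRle : |R| ≤ D * (E * (1 / α + 1 / α ^ 2)) := by
    calc |R| ≤ ∫ s in (0 : ℝ)..t, exp (α * s) * (t - s + 1) * D := by
          refine (intervalIntegral.abs_integral_le_integral_abs ht).trans
            (intervalIntegral.integral_mono_on ht (Continuous.intervalIntegrable (by fun_prop) _ _)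
              (Continuous.intervalIntegrable (by fun_prop) _ _) fun s hs => ?_)
          rw [abs_mul, abs_of_pos (exp_pos _), mul_assoc]
          exact mul_le_mul_of_nonneg_left (hinc s hs) (exp_pos _).le
      _ ≤ D * (E * (1 / α + 1 / α ^ 2)) := by
          rw [intervalIntegral.integral_mul_const, mul_comm]
          exact mul_le_mul_of_nonneg_left (integral_exp_const_mul_mul_sub_add_one_le hα ht) hD
  have hbt : |b t| ≤ (t + 1) * D := by simpa [hb0] using hinc 0 ⟨le_rfl, ht⟩
  have hdecay : t + 1 ≤ E * (1 + 1 / α) := by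
    have h1 : 1 + α * t ≤ E := by linarith [add_one_le_exp (α * t)]
    have h2 : 1 ≤ E := one_le_exp (by positivity)
    have h3 : t ≤ E / α := by rw [le_div_iff₀ hα]; linarith
    rw [mul_add, mul_one, mul_one_div]
    linarith
  have hσD : 0 ≤ |σ| * D := mul_nonneg (abs_nonneg σ) hD
  rw [hrepr]
  calc |σ * b t / E + α * σ * R / E| ≤ |σ| * |b t| / E + α * |σ| * |R| / E := by
        refine (abs_add_le _ _).trans (le_of_eq ?_)
        rw [abs_div, abs_div, abs_mul, abs_mul, abs_mul, abs_of_pos hE, abs_of_pos hα]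
    _ ≤ |σ| * ((t + 1) * D) / E + α * |σ| * (D * (E * (1 / α + 1 / α ^ 2))) / E := by
        gcongr
    _ = |σ| * D * ((t + 1) / E) + |σ| * D * (1 + 1 / α) := by
        field_simp
    _ ≤ |σ| * D * (1 + 1 / α) + |σ| * D * (1 + 1 / α) := by
        gcongr
        rw [div_le_iff₀ hE]
        linarith
    _ = 2 * |σ| * (1 + 1 / α) * D := by ring

lemma isBigO_sqrtLogGrowth_of_integral_equation {α σ C : ℝ} (hα : 0 < α) {b y : ℝ → ℝ}
    (hb : Continuous b) (hy : Continuous y) (hb0 : b 0 = 0)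
    (hyb : ∀ t, 0 ≤ t → y t = σ * b t - α * ∫ s in (0 : ℝ)..t, y s)
    (hinc : ∀ s t, 0 ≤ s → s ≤ t → |b t - b s| ≤ C * (t - s + 1) * sqrtLogGrowth t) :
    y =O[atTop] sqrtLogGrowth := by
  refine .of_bound (2 * |σ| * (1 + 1 / α) * C) ?_
  filter_upwards [eventually_ge_atTop 0] with t ht
  rw [Real.norm_eq_abs, Real.norm_of_nonneg (sqrtLogGrowth_nonneg t), mul_assoc _ C]
  exact abs_le_of_integral_equation hα hb hy hb0 hyb ht fun s hs =>
    (hinc s t hs.1 hs.2).trans_eq (by ring)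

lemma tendsto_exp_div_integral_exp_of_isLittleO_log {x : ℝ → ℝ} (hx : Continuous x)
    (hlog : x =o[atTop] log) :
    Tendsto (fun t => exp (x t) / ∫ s in (0 : ℝ)..t, exp (x s)) atTop (𝓝 0) := by
  obtain ⟨T, hT⟩ := eventually_atTop.1 ((hlog.bound (by norm_num : (0 : ℝ) < 1 / 4)).and
    (eventually_ge_atTop 1))
  have hlim : Tendsto (fun t => 2 * exp (-(log t / 2))) atTop (𝓝 0) := by
    simpa using ((tendsto_exp_atBot.comp (tendsto_neg_atTop_atBot.comp
      (tendsto_log_atTop.atTop_div_const two_pos))).const_mul 2)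
  refine squeeze_zero' ?_ ?_ hlim
  · filter_upwards [eventually_ge_atTop 0] with t ht
    exact div_nonneg (exp_pos _).le
      (intervalIntegral.integral_nonneg ht fun s _ => (exp_pos _).le)
  filter_upwards [eventually_ge_atTop (2 * T)] with t ht
  have hT1 : 1 ≤ T := (hT T le_rfl).2
  have ht0 : 0 < t := by linarith
  set L := log t
  have hxle : ∀ s, T ≤ s → s ≤ t → |x s| ≤ L / 4 := fun s hTs hst => by
    have ⟨hs, hs1⟩ := hT s hTs
    rw [Real.norm_eq_abs, Real.norm_eq_abs, abs_of_nonneg (log_nonneg hs1)] at hs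
    linarith [log_le_log (by linarith) hst]
  have hnum : exp (x t) ≤ exp (L / 4) :=
    exp_le_exp.2 (le_of_abs_le (hxle t (by linarith) le_rfl))
  have hden : t / 2 * exp (-(L / 4)) ≤ ∫ s in (0 : ℝ)..t, exp (x s) := by
    calc t / 2 * exp (-(L / 4)) = ∫ s in (t / 2)..t, exp (-(L / 4)) := by
          rw [intervalIntegral.integral_const, smul_eq_mul]; ring
      _ ≤ ∫ s in (t / 2)..t, exp (x s) :=
          intervalIntegral.integral_mono_on (by linarith) intervalIntegrable_const
            (Continuous.intervalIntegrable (by fun_prop) _ _) fun s hs =>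
              exp_le_exp.2 (neg_le_of_abs_le (hxle s (by linarith [hs.1]) hs.2))
      _ ≤ ∫ s in (0 : ℝ)..t, exp (x s) :=
          intervalIntegral.integral_mono_interval (by linarith) (by linarith) le_rfl
            (.of_forall fun s => (exp_pos _).le) (Continuous.intervalIntegrable (by fun_prop) _ _)
  calc exp (x t) / ∫ s in (0 : ℝ)..t, exp (x s) ≤ exp (L / 4) / (t / 2 * exp (-(L / 4))) :=
        div_le_div₀ (exp_pos _).le hnum (by positivity) hden
    _ = 2 * exp (-(L / 2)) := by
        rw [show t = exp L from (exp_log ht0).symm]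
        field_simp
        rw [← exp_add, ← exp_add]
        ring_nf

/-- The paper's `I(t)`, with `κ = γ + μ` and exponent `x t = ν t + N Y(t)`. -/
noncomputable def sisCurve (N i0 κ : ℝ) (x : ℝ → ℝ) (t : ℝ) : ℝ :=
  N * i0 * exp (x t) / (N - i0 + i0 * exp (x t) + i0 * κ * ∫ s in (0 : ℝ)..t, exp (x s))

section SIS

variable {N i0 κ : ℝ} {x : ℝ → ℝ}

lemma integral_exp_nonneg {t : ℝ} (ht : 0 ≤ t) : 0 ≤ ∫ s in (0 : ℝ)..t, exp (x s) :=
  intervalIntegral.integral_nonneg ht fun _ _ => (exp_pos _).le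

lemma sisCurve_nonneg (hi0 : i0 ∈ Ioo 0 N) (hκ : 0 ≤ κ) {t : ℝ} (ht : 0 ≤ t) :
    0 ≤ sisCurve N i0 κ x t := by
  obtain ⟨hi0, hi0N⟩ := hi0
  have hN : 0 < N := hi0.trans hi0N
  have := mul_nonneg (mul_nonneg hi0.le hκ) (integral_exp_nonneg (x := x) ht)
  unfold sisCurve
  exact div_nonneg (by positivity) (by nlinarith [exp_pos (x t)])

lemma tendsto_sisCurve_of_tendsto_atBot (hi0 : i0 ∈ Ioo 0 N) (hκ : 0 ≤ κ)
    (hx : Tendsto x atTop atBot) : Tendsto (sisCurve N i0 κ x) atTop (𝓝 0) := by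
  obtain ⟨hi0, hi0N⟩ := hi0
  have hN : 0 < N := hi0.trans hi0N
  have hNi0 : 0 < N - i0 := by linarith
  have hlim : Tendsto (fun t => N * i0 / (N - i0) * exp (x t)) atTop (𝓝 0) := by
    simpa using (tendsto_exp_atBot.comp hx).const_mul (N * i0 / (N - i0))
  refine squeeze_zero' ?_ ?_ hlim
  · filter_upwards [eventually_ge_atTop 0] with t ht using sisCurve_nonneg ⟨hi0, hi0N⟩ hκ ht
  filter_upwards [eventually_ge_atTop 0] with t ht
  have := mul_nonneg (mul_nonneg hi0.le hκ) (integral_exp_nonneg (x := x) ht)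
  rw [sisCurve, div_mul_eq_mul_div, mul_comm (N * i0)]
  exact div_le_div_of_nonneg_left (by positivity) (by linarith)
    (by nlinarith [exp_pos (x t)])

lemma tendsto_sisCurve_of_isLittleO_log (hi0 : i0 ∈ Ioo 0 N) (hκ : 0 < κ)
    (hx : Continuous x) (hlog : x =o[atTop] log) : Tendsto (sisCurve N i0 κ x) atTop (𝓝 0) := by
  obtain ⟨hi0, hi0N⟩ := hi0
  have hN : 0 < N := hi0.trans hi0N
  have hlim := (tendsto_exp_div_integral_exp_of_isLittleO_log hx hlog).const_mul (N / κ)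
  rw [mul_zero] at hlim
  refine squeeze_zero' ?_ ?_ hlim
  · filter_upwards [eventually_ge_atTop 0] with t ht using sisCurve_nonneg ⟨hi0, hi0N⟩ hκ.le ht
  filter_upwards [eventually_gt_atTop 0] with t ht
  have hJ : 0 < ∫ s in (0 : ℝ)..t, exp (x s) :=
    intervalIntegral.intervalIntegral_pos_of_pos_on
      (Continuous.intervalIntegrable (by fun_prop) _ _) (fun _ _ => exp_pos _) ht
  calc sisCurve N i0 κ x t ≤ N * i0 * exp (x t) / (i0 * κ * ∫ s in (0 : ℝ)..t, exp (x s)) :=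
        div_le_div_of_nonneg_left (by positivity) (by positivity)
          (by nlinarith [exp_pos (x t)])
    _ = N / κ * (exp (x t) / ∫ s in (0 : ℝ)..t, exp (x s)) := by
        field_simp

end SIS

lemma tendsto_sisCurve_of_nonpos {N i0 κ ν : ℝ} (hi0 : i0 ∈ Ioo 0 N) (hκ : 0 < κ) (hν : ν ≤ 0)
    {y : ℝ → ℝ} (hy : Continuous y) (hlog : y =o[atTop] log) :
    Tendsto (sisCurve N i0 κ fun t => ν * t + N * y t) atTop (𝓝 0) := by
  rcases hν.lt_or_eq with hν | rfl
  · refine tendsto_sisCurve_of_tendsto_atBot hi0 hκ.le (tendsto_atBot_mono' atTop ?_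
      (tendsto_id.const_mul_atTop_of_neg (r := ν / 2) (by linarith)))
    have hid : (fun t => N * y t) =o[atTop] id :=
      (hlog.const_mul_left N).trans isLittleO_log_id_atTop
    filter_upwards [hid.bound (c := -ν / 2) (by linarith), eventually_ge_atTop 0] with t ht ht0
    rw [Real.norm_eq_abs, Real.norm_eq_abs, id, abs_of_nonneg ht0] at ht
    show ν * t + N * y t ≤ ν / 2 * t
    linarith [le_abs_self (N * y t)]
  · simpa using tendsto_sisCurve_of_isLittleO_log hi0 hκ (by fun_prop) (hlog.const_mul_left N)

theorem sis_ou_extinction_general {Ω : Type*} [MeasurableSpace Ω]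
    (P : Measure Ω) (B : ℝ → Ω → ℝ) (hB : IsStandardBrownianMotion P B)
    (α σ N γ μ i0 : ℝ) (hα : 0 < α)
    (hγ : 0 < γ) (hμ : 0 < μ)
    (hi0 : i0 ∈ Set.Ioo 0 N)
    (ν : ℝ) (hνle : ν ≤ 0)
    (Y : ℝ → Ω → ℝ)
    (hYcont : ∀ᵐ ω ∂P, Continuous fun t => Y t ω)
    (hY : ∀ᵐ ω ∂P, ∀ t : ℝ, 0 ≤ t →
      Y t ω = σ * B t ω - α * ∫ s in (0:ℝ)..t, Y s ω)
    (I : ℝ → Ω → ℝ)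
    (hI : ∀ ω, ∀ t : ℝ, I t ω = N * i0 * Real.exp (ν * t + N * Y t ω) /
      (N - i0 + i0 * Real.exp (ν * t + N * Y t ω) +
        i0 * (γ + μ) * ∫ s in (0:ℝ)..t, Real.exp (ν * s + N * Y s ω))) :
    ∀ᵐ ω ∂P, Tendsto (fun t => I t ω) atTop (nhds 0) := by
  filter_upwards [hB.ae_exists_abs_sub_le, hB.cont, hYcont, hY] with ω ⟨C, hC⟩ hBω hYω hYeq
  have hYgrowth := isBigO_sqrtLogGrowth_of_integral_equation hα hBω hYω (hB.init ω) hYeq hC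
  rw [show (fun t => I t ω) = sisCurve N i0 (γ + μ) (fun t => ν * t + N * Y t ω) from
    funext (hI ω)]
  exact tendsto_sisCurve_of_nonpos hi0 (by linarith) hνle hYω
    (hYgrowth.trans_isLittleO isLittleO_sqrtLogGrowth_log)

/-- Stochastic extinction theorem: with `Y` the mean-reverting OU process and
`ν = βN - (γ+μ) ≤ 0`, the perturbed SIS process tends to `0` almost surely. -/
theorem sis_ou_extinction {Ω : Type*} [MeasurableSpace Ω]
    (P : Measure Ω) (B : ℝ → Ω → ℝ) (hB : IsStandardBrownianMotion P B)
    (α σ N γ μ β i0 : ℝ) (hα : 0 < α) (hσ : 0 < σ)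
    (hN : 0 < N) (hγ : 0 < γ) (hμ : 0 < μ) (hβ : 0 < β)
    (hi0 : i0 ∈ Set.Ioo 0 N)
    (ν : ℝ) (hν : ν = β * N - (γ + μ)) (hνle : ν ≤ 0)
    (Y : ℝ → Ω → ℝ) (hYmeas : ∀ t, Measurable (Y t))
    (hYcont : ∀ᵐ ω ∂P, Continuous fun t => Y t ω)
    (hY : ∀ᵐ ω ∂P, ∀ t : ℝ, 0 ≤ t →
      Y t ω = σ * B t ω - α * ∫ s in (0:ℝ)..t, Y s ω)
    (I : ℝ → Ω → ℝ)
    (hI : ∀ ω, ∀ t : ℝ, I t ω = N * i0 * Real.exp (ν * t + N * Y t ω) /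
      (N - i0 + i0 * Real.exp (ν * t + N * Y t ω) +
        i0 * (γ + μ) * ∫ s in (0:ℝ)..t, Real.exp (ν * s + N * Y s ω))) :
    ∀ᵐ ω ∂P, Tendsto (fun t => I t ω) atTop (nhds 0) :=
  sis_ou_extinction_general P B hB α σ N γ μ i0 hα hγ hμ hi0 ν hνle Y hYcont hY I hI
end
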